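/- K(1/√2) = Γ(1/4)² / (4√π). -/

import Mathlib

/-
The substitution `t = cos⁴ θ` turns the integrand of `K(1/√2)` into `(√2/4) t^(-3/4) (1-t)^(-1/2)`,
so `K(1/√2) = (√2/4) B(1/4, 1/2) = (√2/4) Γ(1/4) Γ(1/2) / Γ(3/4)`. Since `Γ(1/2) = √π` and the
reflection formula gives `Γ(1/4) Γ(3/4) = π / sin(π/4) = π √2`, this is `Γ(1/4)² / (4√π)`.
-/

open Real

noncomputable def ellK (k : ℝ) : ℝ :=
  ∫ θ in (0 : ℝ)..(π / 2), 1 / Real.sqrt (1 - k ^ 2 * Real.sin θ ^ 2)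

noncomputable def ellE (k : ℝ) : ℝ :=
  ∫ θ in (0 : ℝ)..(π / 2), Real.sqrt (1 - k ^ 2 * Real.sin θ ^ 2)

open MeasureTheory Set

theorem Real.integral_rpow_mul_one_sub_rpow {a b : ℝ} (ha : 0 < a) (hb : 0 < b) :
    ∫ x in Ioo (0 : ℝ) 1, x ^ (a - 1) * (1 - x) ^ (b - 1)
      = Gamma a * Gamma b / Gamma (a + b) := by
  have hbeta : Complex.betaIntegral a b
      = ((∫ x in Ioo (0 : ℝ) 1, x ^ (a - 1) * (1 - x) ^ (b - 1) : ℝ) : ℂ) := by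
    rw [Complex.betaIntegral, intervalIntegral.integral_of_le zero_le_one,
      integral_Ioc_eq_integral_Ioo, ← integral_complex_ofReal]
    refine setIntegral_congr_fun measurableSet_Ioo fun x ⟨hx0, hx1⟩ => ?_
    rw [Complex.ofReal_mul, Complex.ofReal_cpow hx0.le,
      Complex.ofReal_cpow (sub_nonneg.2 hx1.le)]
    push_cast
    rfl
  have h := Complex.Gamma_mul_Gamma_eq_betaIntegral (s := a) (t := b) (by simpa) (by simpa)
  rw [hbeta, ← Complex.ofReal_add, Complex.Gamma_ofReal, Complex.Gamma_ofReal,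
    Complex.Gamma_ofReal] at h
  rw [eq_div_iff (Gamma_pos_of_pos (add_pos ha hb)).ne', mul_comm]
  exact_mod_cast h.symm

theorem Real.Gamma_one_quarter_mul_Gamma_three_quarters :
    Gamma (1 / 4) * Gamma (3 / 4) = π * √2 := by
  have h := Gamma_mul_Gamma_one_sub (1 / 4)
  rw [show π * (1 / 4) = π / 4 by ring, sin_pi_div_four] at h
  rw [show (3 / 4 : ℝ) = 1 - 1 / 4 by norm_num, h]
  field_simp
  rw [sq_sqrt zero_le_two]

theorem Real.image_cos_pow_Ioo {n : ℕ} (hn : n ≠ 0) :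
    (fun θ : ℝ => cos θ ^ n) '' Ioo 0 (π / 2) = Ioo 0 1 := by
  ext t
  constructor
  · rintro ⟨θ, ⟨h0, h2⟩, rfl⟩
    have hc : 0 < cos θ := cos_pos_of_mem_Ioo ⟨by linarith [pi_pos], h2⟩
    have hc1 : cos θ < 1 := by
      nlinarith [sin_sq_add_cos_sq θ, sin_pos_of_pos_of_lt_pi h0 (by linarith [pi_pos])]
    exact ⟨by positivity, pow_lt_one₀ hc.le hc1 hn⟩
  · rintro ⟨ht0, ht1⟩
    have hu0 : 0 < t ^ (n⁻¹ : ℝ) := rpow_pos_of_pos ht0 _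
    have hu1 : t ^ (n⁻¹ : ℝ) < 1 := rpow_lt_one ht0.le ht1 (by positivity)
    refine ⟨arccos (t ^ (n⁻¹ : ℝ)), ⟨arccos_pos.2 hu1, arccos_lt_pi_div_two.2 hu0⟩, ?_⟩
    beta_reduce
    rw [cos_arccos (by linarith) hu1.le, rpow_inv_natCast_pow ht0.le hn]

theorem Real.injOn_cos_pow_Ioo {n : ℕ} (hn : n ≠ 0) :
    InjOn (fun θ : ℝ => cos θ ^ n) (Ioo 0 (π / 2)) := by
  have hsub : Ioo 0 (π / 2) ⊆ Icc 0 π := fun x hx => ⟨hx.1.le, by linarith [pi_pos, hx.2]⟩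
  refine ((pow_left_strictMonoOn₀ hn).comp_strictAntiOn (strictAntiOn_cos.mono hsub)
    fun x hx => ?_).injOn
  exact (cos_pos_of_mem_Ioo ⟨by linarith [pi_pos, hx.1], hx.2⟩).le

theorem abs_deriv_cos_pow_four_mul_beta_integrand {θ : ℝ} (hθ : θ ∈ Ioo 0 (π / 2)) :
    |4 * cos θ ^ 3 * -sin θ|
        * (√2 / 4 * ((cos θ ^ 4) ^ (1 / 4 - 1 : ℝ) * (1 - cos θ ^ 4) ^ (1 / 2 - 1 : ℝ)))
      = 1 / √(1 - (1 / √2) ^ 2 * sin θ ^ 2) := by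
  obtain ⟨h0, h2⟩ := hθ
  have hc : 0 < cos θ := cos_pos_of_mem_Ioo ⟨by linarith [pi_pos], h2⟩
  have hs : 0 < sin θ := sin_pos_of_pos_of_lt_pi h0 (by linarith [pi_pos])
  have habs : |4 * cos θ ^ 3 * -sin θ| = 4 * cos θ ^ 3 * sin θ := by
    rw [mul_neg, abs_neg, abs_of_pos (by positivity)]
  have hcos : (cos θ ^ 4) ^ (1 / 4 - 1 : ℝ) = (cos θ ^ 3)⁻¹ := by
    rw [← rpow_natCast, ← rpow_mul hc.le, ← rpow_natCast, ← rpow_neg hc.le]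
    norm_num
  have hsin : (1 - cos θ ^ 4) ^ (1 / 2 - 1 : ℝ) = (sin θ * √(1 + cos θ ^ 2))⁻¹ := by
    rw [show 1 - cos θ ^ 4 = sin θ ^ 2 * (1 + cos θ ^ 2) by
        linear_combination (-(1 + cos θ ^ 2)) * sin_sq_add_cos_sq θ,
      show (1 / 2 - 1 : ℝ) = -(1 / 2) by norm_num, rpow_neg (by positivity), ← sqrt_eq_rpow,
      sqrt_mul (sq_nonneg _), sqrt_sq hs.le]
  have hmod : 1 - (1 / √2) ^ 2 * sin θ ^ 2 = (1 + cos θ ^ 2) / 2 := by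
    rw [div_pow, one_pow, sq_sqrt zero_le_two]
    linear_combination (-(1 / 2)) * sin_sq_add_cos_sq θ
  rw [habs, hcos, hsin, hmod, sqrt_div (by positivity)]
  field_simp

theorem ellK_one_div_sqrt_two_eq_integral :
    ellK (1 / √2)
      = √2 / 4 * ∫ t in Ioo (0 : ℝ) 1, t ^ (1 / 4 - 1 : ℝ) * (1 - t) ^ (1 / 2 - 1 : ℝ) := by
  have hderiv : ∀ θ ∈ Ioo (0 : ℝ) (π / 2), HasDerivWithinAt (fun θ => cos θ ^ 4)
      (4 * cos θ ^ 3 * -sin θ) (Ioo 0 (π / 2)) θ := fun θ _ =>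
    ((hasDerivAt_cos θ).pow 4).hasDerivWithinAt
  have hsubst := integral_image_eq_integral_abs_deriv_smul measurableSet_Ioo hderiv
    (injOn_cos_pow_Ioo four_ne_zero)
    fun t => √2 / 4 * (t ^ (1 / 4 - 1 : ℝ) * (1 - t) ^ (1 / 2 - 1 : ℝ))
  rw [image_cos_pow_Ioo four_ne_zero] at hsubst
  rw [← integral_const_mul, hsubst, ellK, intervalIntegral.integral_of_le (by positivity),
    integral_Ioc_eq_integral_Ioo]
  exact setIntegral_congr_fun measurableSet_Ioo fun θ hθ =>
    (abs_deriv_cos_pow_four_mul_beta_integrand hθ).symm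

theorem ellK_one_div_sqrt_two :
    ellK (1 / Real.sqrt 2) = Real.Gamma (1 / 4) ^ 2 / (4 * Real.sqrt π) := by
  have hΓ34 : Gamma (3 / 4) = π * √2 / Gamma (1 / 4) := by
    rw [eq_div_iff (Gamma_pos_of_pos (by norm_num)).ne', mul_comm,
      Gamma_one_quarter_mul_Gamma_three_quarters]
  rw [ellK_one_div_sqrt_two_eq_integral,
    integral_rpow_mul_one_sub_rpow (by norm_num) (by norm_num),
    show (1 / 4 + 1 / 2 : ℝ) = 3 / 4 by norm_num, hΓ34, Gamma_one_half_eq]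
  field_simp
  rw [sq_sqrt pi_pos.le]
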